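/- arXiv:math/0508533 — 2 statements merged into one kernel-verified Lean document; each statement's English description precedes it below -/
import Mathlib

section
/- For all sufficiently large Δ>0, the function φ is well defined on all of ℝ² (i.e. for every y≠0 there is a unique r>0 with y/r∈L) and has the following properties: φ(y)≥0 for all y∈ℝ² with φ(y)>0 for y≠0; φ(r·y)=r·φ(y) for every r>0 and y∈ℝ²; and {y∈ℝ² : φ(y)=1}=L. -/
noncomputable section

/-- The quadratic form `e(y₂,y₃) = a·y₂² + b·(y₂−y₃)²` defining the ellipse. -/
def eF (a b : ℝ) (y : ℝ × ℝ) : ℝ := a * y.1 ^ 2 + b * (y.1 - y.2) ^ 2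

/-- The gradient of `eF`. -/
def gradE (a b : ℝ) (y : ℝ × ℝ) : ℝ × ℝ :=
  (2 * a * y.1 + 2 * b * (y.1 - y.2), -(2 * b * (y.1 - y.2)))

/-- Euclidean inner product on `ℝ × ℝ`. -/
def dotp (u v : ℝ × ℝ) : ℝ := u.1 * v.1 + u.2 * v.2

/-- Euclidean norm on `ℝ × ℝ`. -/
def enorm2 (v : ℝ × ℝ) : ℝ := Real.sqrt (v.1 ^ 2 + v.2 ^ 2)

/-- `T` is a point of the ellipse in the open quadrant `{y₂<0, y₃<0}` where the
gradient of `e` is a positive multiple of `(−Δ, 1)`. -/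
def IsT3 (a b Δ : ℝ) (T : ℝ × ℝ) : Prop :=
  eF a b T = 1 ∧ T.1 < 0 ∧ T.2 < 0 ∧ ∃ c > 0, gradE a b T = c • ((-Δ, 1) : ℝ × ℝ)

/-- `T` is a point of the ellipse with `y₃ < 0` where the gradient of `e`
is a positive multiple of `(1, −Δ)`. -/
def IsT2 (a b Δ : ℝ) (T : ℝ × ℝ) : Prop :=
  eF a b T = 1 ∧ T.2 < 0 ∧ ∃ c > 0, gradE a b T = c • ((1, -Δ) : ℝ × ℝ)

/-- The configuration of the tangency points `T₂, T₃` and of the intercepts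
`K₂ = (u₂,0)`, `K₃ = (0,u₃)` of the corresponding tangent lines with the axes. -/
def GoodConfig (a b Δ u₂ u₃ : ℝ) (T₂ T₃ : ℝ × ℝ) : Prop :=
  IsT2 a b Δ T₂ ∧ IsT3 a b Δ T₃ ∧ 0 < u₂ ∧ 0 < u₃ ∧
  dotp (gradE a b T₂) (((u₂, 0) : ℝ × ℝ) - T₂) = 0 ∧
  dotp (gradE a b T₃) (((0, u₃) : ℝ × ℝ) - T₃) = 0

/-- The closed arc of the ellipse from `T₂` to `T₃` passing through
`(−a^{−1/2}, −a^{−1/2})`: the points of the ellipse whose outward normal direction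
lies in the closed convex cone spanned by `(1, −Δ)` (normal at `T₂`) and
`(−Δ, 1)` (normal at `T₃`). -/
def arcE (a b Δ : ℝ) : Set (ℝ × ℝ) :=
  {y | eF a b y = 1 ∧ ∃ c₂ c₃ : ℝ, 0 ≤ c₂ ∧ 0 ≤ c₃ ∧
    gradE a b y = c₂ • ((1, -Δ) : ℝ × ℝ) + c₃ • ((-Δ, 1) : ℝ × ℝ)}

/-- The closed contour `L`: segment `K₃K₂`, segment `K₂T₂`, the arc of the ellipse
from `T₂` to `T₃` through `(−a^{−1/2},−a^{−1/2})`, and segment `T₃K₃`. -/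
def contourL (a b Δ u₂ u₃ : ℝ) (T₂ T₃ : ℝ × ℝ) : Set (ℝ × ℝ) :=
  segment ℝ ((0, u₃) : ℝ × ℝ) ((u₂, 0) : ℝ × ℝ) ∪
    segment ℝ ((u₂, 0) : ℝ × ℝ) T₂ ∪ arcE a b Δ ∪
    segment ℝ T₃ ((0, u₃) : ℝ × ℝ)

/-- `φ` is the homogeneous functional associated with the contour `L`:
`φ(0) = 0` and, for `y ≠ 0`, `φ(y)` is positive with `y/φ(y) ∈ L`. -/
def IsPhi (L : Set (ℝ × ℝ)) (φ : ℝ × ℝ → ℝ) : Prop :=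
  φ 0 = 0 ∧ ∀ y : ℝ × ℝ, y ≠ 0 → 0 < φ y ∧ (φ y)⁻¹ • y ∈ L

/-- `n` is the outward unit normal field of the contour `L` (defined except at
`K₂` and `K₃`): on the elliptic arc it is `∇e(y)/‖∇e(y)‖`, and it is constant on
each of the three straight pieces, equal to `n(T₂)` on `(K₂,T₂]`, to `n(T₃)` on
`[T₃,K₃)`, and to the normalized `(u₂⁻¹, u₃⁻¹)` on `(K₃,K₂)`. -/
def IsN (a b Δ u₂ u₃ : ℝ) (T₂ T₃ : ℝ × ℝ) (n : ℝ × ℝ → ℝ × ℝ) : Prop :=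
  (∀ y ∈ arcE a b Δ, n y = (enorm2 (gradE a b y))⁻¹ • gradE a b y) ∧
  (∀ y ∈ segment ℝ ((u₂, 0) : ℝ × ℝ) T₂, y ≠ ((u₂, 0) : ℝ × ℝ) → n y = n T₂) ∧
  (∀ y ∈ segment ℝ T₃ ((0, u₃) : ℝ × ℝ), y ≠ ((0, u₃) : ℝ × ℝ) → n y = n T₃) ∧
  (∀ y ∈ segment ℝ ((0, u₃) : ℝ × ℝ) ((u₂, 0) : ℝ × ℝ),
    y ≠ ((0, u₃) : ℝ × ℝ) → y ≠ ((u₂, 0) : ℝ × ℝ) →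
    n y = (enorm2 ((u₂⁻¹, u₃⁻¹) : ℝ × ℝ))⁻¹ • ((u₂⁻¹, u₃⁻¹) : ℝ × ℝ))

/-! For `Δ > 1` the vertices `K₃, K₂, T₂, T₃` of `L` turn clockwise once around the origin: the
determinants of consecutive vertices are negative. Hence the four sectors spanned by consecutive
vertices cover the plane, adjacent sectors meet only along the ray through their common vertex, and
opposite sectors meet only at `0`. In each sector the corresponding piece of `L` is the level set
`{f = 1}` of a positively homogeneous function `f`: for a segment, the linear functional equal to `1`
at both of its ends; for the elliptic arc, `√e` (the arc is the part of the ellipse in the sector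
spanned by `T₂` and `T₃`, because `∇e` is a linear isomorphism). These functions agree on common
rays, so every open ray from `0` meets `L` exactly once, and `φ` is the resulting gauge. -/

open Set Function

section Sector

variable {E : Type*} [AddCommGroup E] [Module ℝ E]

def sector (A B : E) : Set E := {y | ∃ s t : ℝ, 0 ≤ s ∧ 0 ≤ t ∧ y = s • A + t • B}

lemma smul_mem_sector {A B y : E} {r : ℝ} (hr : 0 ≤ r) (hy : y ∈ sector A B) :
    r • y ∈ sector A B := by
  obtain ⟨s, t, hs, ht, rfl⟩ := hy
  exact ⟨r * s, r * t, mul_nonneg hr hs, mul_nonneg hr ht, by rw [smul_add, smul_smul, smul_smul]⟩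

lemma sector_smul_smul {A B : E} {c c' : ℝ} (hc : 0 < c) (hc' : 0 < c') :
    sector (c • A) (c' • B) = sector A B := by
  ext y
  constructor
  · rintro ⟨s, t, hs, ht, rfl⟩
    exact ⟨s * c, t * c', by positivity, by positivity, by simp only [smul_smul]⟩
  · rintro ⟨s, t, hs, ht, rfl⟩
    refine ⟨s / c, t / c', by positivity, by positivity, ?_⟩
    rw [smul_smul, smul_smul, div_mul_cancel₀ _ hc.ne', div_mul_cancel₀ _ hc'.ne']

lemma map_mem_sector_iff {F : Type*} [AddCommGroup F] [Module ℝ F] (G : E →ₗ[ℝ] F)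
    (hG : Injective G) {A B y : E} : G y ∈ sector (G A) (G B) ↔ y ∈ sector A B := by
  constructor
  · rintro ⟨s, t, hs, ht, h⟩
    exact ⟨s, t, hs, ht, hG (by simpa using h)⟩
  · rintro ⟨s, t, hs, ht, rfl⟩
    exact ⟨s, t, hs, ht, by simp⟩

lemma segment_eq_sector_inter {A B : E} (ℓ : E →ₗ[ℝ] ℝ) (hA : ℓ A = 1) (hB : ℓ B = 1) :
    segment ℝ A B = sector A B ∩ {y | ℓ y = 1} := by
  ext y
  constructor
  · rintro ⟨s, t, hs, ht, hst, rfl⟩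
    exact ⟨⟨s, t, hs, ht, rfl⟩, by simp [hA, hB, hst]⟩
  · rintro ⟨⟨s, t, hs, ht, rfl⟩, h⟩
    exact ⟨s, t, hs, ht, by simpa [hA, hB] using h, rfl⟩

lemma pos_of_mem_sector {A B y : E} (ℓ : E →ₗ[ℝ] ℝ) (hA : 0 < ℓ A) (hB : 0 < ℓ B)
    (hy : y ∈ sector A B) (hy0 : y ≠ 0) : 0 < ℓ y := by
  obtain ⟨s, t, hs, ht, rfl⟩ := hy
  simp only [map_add, map_smul, smul_eq_mul]
  rcases hs.eq_or_lt with rfl | hs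
  · rcases ht.eq_or_lt with rfl | ht
    · simp at hy0
    · positivity
  · positivity

lemma eq_zero_of_mem_sector_of_mem_sector {A B D F y : E} (ℓ : E →ₗ[ℝ] ℝ) (hA : 0 ≤ ℓ A)
    (hB : 0 ≤ ℓ B) (hD : ℓ D < 0) (hF : ℓ F < 0) (h₁ : y ∈ sector A B) (h₂ : y ∈ sector D F) :
    y = 0 := by
  have hy : 0 ≤ ℓ y := by
    obtain ⟨s, t, hs, ht, rfl⟩ := h₁
    simp only [map_add, map_smul, smul_eq_mul]
    positivity
  obtain ⟨s, t, hs, ht, rfl⟩ := h₂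
  simp only [map_add, map_smul, smul_eq_mul] at hy
  obtain rfl : s = 0 := by nlinarith
  obtain rfl : t = 0 := by nlinarith
  simp

lemma exists_eq_smul_of_mem_sector_of_mem_sector {A B D y : E} (ℓ : E →ₗ[ℝ] ℝ) (hA : 0 < ℓ A)
    (hB : ℓ B = 0) (hD : ℓ D < 0) (h₁ : y ∈ sector A B) (h₂ : y ∈ sector B D) :
    ∃ t : ℝ, 0 ≤ t ∧ y = t • B := by
  have hy : ℓ y ≤ 0 := by
    obtain ⟨s, t, hs, ht, rfl⟩ := h₂
    simp only [map_add, map_smul, smul_eq_mul, hB]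
    nlinarith
  obtain ⟨s, t, hs, ht, rfl⟩ := h₁
  simp only [map_add, map_smul, smul_eq_mul, hB] at hy
  obtain rfl : s = 0 := by nlinarith
  exact ⟨t, ht, by simp⟩

end Sector

section RayUnique

variable {E ι : Type*} [AddCommGroup E] [Module ℝ E] {C : ι → Set E} {f : ι → E → ℝ}

theorem existsUnique_inv_smul_mem_iUnion (hcover : ∀ y, ∃ i, y ∈ C i)
    (hC : ∀ i, ∀ r : ℝ, 0 ≤ r → ∀ y ∈ C i, r • y ∈ C i)
    (hf : ∀ i, ∀ r : ℝ, 0 ≤ r → ∀ y, f i (r • y) = r * f i y)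
    (hpos : ∀ i, ∀ y ∈ C i, y ≠ 0 → 0 < f i y)
    (hcompat : ∀ i j, ∀ y ∈ C i, y ∈ C j → f i y = f j y) {y : E} (hy : y ≠ 0) :
    ∃! r : ℝ, 0 < r ∧ r⁻¹ • y ∈ ⋃ i, C i ∩ {x | f i x = 1} := by
  obtain ⟨i, hi⟩ := hcover y
  have hfi := hpos i y hi hy
  refine ⟨f i y, ⟨hfi, mem_iUnion.2 ⟨i, hC i _ (inv_nonneg.2 hfi.le) y hi, ?_⟩⟩, ?_⟩
  · rw [mem_ofPred_eq, hf i _ (inv_nonneg.2 hfi.le), inv_mul_cancel₀ hfi.ne']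
  rintro r ⟨hr, hmem⟩
  obtain ⟨j, hj, hfj⟩ := mem_iUnion.1 hmem
  have hyj : y ∈ C j := by simpa [smul_smul, hr.ne'] using hC j r hr.le _ hj
  have : f j y = r := by
    rw [← smul_inv_smul₀ hr.ne' y, hf j r hr.le, hfj.out, mul_one]
  rw [← this, hcompat i j y hi hyj]

theorem zero_notMem_iUnion (hf : ∀ i, ∀ r : ℝ, 0 ≤ r → ∀ y, f i (r • y) = r * f i y) :
    (0 : E) ∉ ⋃ i, C i ∩ {x | f i x = 1} := by
  simp only [mem_iUnion, mem_inter_iff, mem_ofPred_eq, not_exists, not_and]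
  intro i _ h
  simpa [h] using hf i 0 le_rfl 0

end RayUnique

namespace IsPhi

variable {L : Set (ℝ × ℝ)} {φ : ℝ × ℝ → ℝ}

lemma nonneg (hφ : IsPhi L φ) (y : ℝ × ℝ) : 0 ≤ φ y := by
  rcases eq_or_ne y 0 with rfl | hy
  · exact hφ.1.ge
  · exact (hφ.2 y hy).1.le

lemma eq_of_inv_smul_mem (hL : ∀ y ≠ 0, ∃! r : ℝ, 0 < r ∧ r⁻¹ • y ∈ L) (hφ : IsPhi L φ)
    {y : ℝ × ℝ} (hy : y ≠ 0) {r : ℝ} (hr : 0 < r) (hmem : r⁻¹ • y ∈ L) : φ y = r :=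
  (hL y hy).unique (hφ.2 y hy) ⟨hr, hmem⟩

lemma map_smul (hL : ∀ y ≠ 0, ∃! r : ℝ, 0 < r ∧ r⁻¹ • y ∈ L) (hφ : IsPhi L φ) {r : ℝ}
    (hr : 0 < r) (y : ℝ × ℝ) : φ (r • y) = r * φ y := by
  rcases eq_or_ne y 0 with rfl | hy
  · rw [smul_zero, hφ.1, mul_zero]
  obtain ⟨hφy, hmem⟩ := hφ.2 y hy
  refine hφ.eq_of_inv_smul_mem hL (smul_ne_zero hr.ne' hy) (mul_pos hr hφy) ?_
  rwa [smul_smul, mul_inv_rev, inv_mul_cancel_right₀ hr.ne']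

lemma setOf_eq_one (hL : ∀ y ≠ 0, ∃! r : ℝ, 0 < r ∧ r⁻¹ • y ∈ L) (h0 : (0 : ℝ × ℝ) ∉ L)
    (hφ : IsPhi L φ) : {y | φ y = 1} = L := by
  ext y
  constructor
  · intro h
    have hy : y ≠ 0 := by rintro rfl; simp [hφ.1] at h
    simpa [h.out] using (hφ.2 y hy).2
  · intro hy
    exact hφ.eq_of_inv_smul_mem hL (ne_of_mem_of_not_mem hy h0) one_pos (by simpa using hy)

end IsPhi

def wedge (u : ℝ × ℝ) : ℝ × ℝ →ₗ[ℝ] ℝ := u.1 • LinearMap.snd ℝ ℝ ℝ - u.2 • LinearMap.fst ℝ ℝ ℝ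

lemma wedge_apply (u v : ℝ × ℝ) : wedge u v = u.1 * v.2 - u.2 * v.1 := rfl

lemma wedge_swap (u v : ℝ × ℝ) : wedge v u = -wedge u v := by
  simp only [wedge_apply]; ring

lemma wedge_self (u : ℝ × ℝ) : wedge u u = 0 := by
  simp only [wedge_apply]; ring

lemma mem_sector_of_wedge {A B y : ℝ × ℝ} (hAB : wedge A B < 0) (hA : wedge A y ≤ 0)
    (hB : 0 ≤ wedge B y) : y ∈ sector A B := by
  refine ⟨-wedge B y / wedge A B, wedge A y / wedge A B,
    div_nonneg_of_nonpos (by linarith) hAB.le, div_nonneg_of_nonpos hA hAB.le, ?_⟩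
  have key : wedge A B • y = (-wedge B y) • A + wedge A y • B := by
    ext <;> simp only [wedge_apply, Prod.smul_fst, Prod.smul_snd, Prod.fst_add, Prod.snd_add,
      smul_eq_mul] <;> ring
  rw [div_eq_inv_mul, div_eq_inv_mul, mul_smul, mul_smul, ← smul_add, ← key,
    inv_smul_smul₀ hAB.ne]

def sectorGauge (A B : ℝ × ℝ) : ℝ × ℝ →ₗ[ℝ] ℝ := (wedge A B)⁻¹ • (wedge A - wedge B)

lemma sectorGauge_left {A B : ℝ × ℝ} (h : wedge A B ≠ 0) : sectorGauge A B A = 1 := by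
  rw [sectorGauge, LinearMap.smul_apply, LinearMap.sub_apply, wedge_self, wedge_swap A B, zero_sub,
    neg_neg, smul_eq_mul, inv_mul_cancel₀ h]

lemma sectorGauge_right {A B : ℝ × ℝ} (h : wedge A B ≠ 0) : sectorGauge A B B = 1 := by
  rw [sectorGauge, LinearMap.smul_apply, LinearMap.sub_apply, wedge_self, sub_zero, smul_eq_mul,
    inv_mul_cancel₀ h]

lemma exists_sign_change_fin_four (c : Fin 4 → ℝ) (hpos : ¬∀ i, 0 < c i)
    (hneg : ¬∀ i, c i < 0) : ∃ i, c i ≤ 0 ∧ 0 ≤ c (i + 1) := by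
  simp [Fin.forall_fin_succ, Fin.exists_fin_succ] at *
  grind

section CyclicSectors

variable (V : Fin 4 → ℝ × ℝ)

lemma exists_mem_sector_of_wedge (hV : ∀ i, wedge (V i) (V (i + 1)) < 0) {y : ℝ × ℝ}
    (hpos : ¬∀ i, 0 < wedge (V i) y) (hneg : ¬∀ i, wedge (V i) y < 0) :
    ∃ i, y ∈ sector (V i) (V (i + 1)) := by
  obtain ⟨i, h₁, h₂⟩ := exists_sign_change_fin_four (fun i => wedge (V i) y) hpos hneg
  exact ⟨i, mem_sector_of_wedge (hV i) h₁ h₂⟩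

lemma eq_of_mem_sector_of_mem_sector (f : Fin 4 → ℝ × ℝ → ℝ)
    (hV : ∀ i, wedge (V i) (V (i + 1)) < 0)
    (hsep : ∀ i, ∀ y ∈ sector (V i) (V (i + 1)), y ∈ sector (V (i + 2)) (V (i + 2 + 1)) → y = 0)
    (hf : ∀ i, ∀ r : ℝ, 0 ≤ r → ∀ y, f i (r • y) = r * f i y)
    (hleft : ∀ i, f i (V i) = 1) (hright : ∀ i, f i (V (i + 1)) = 1) (i j : Fin 4)
    {y : ℝ × ℝ} (hi : y ∈ sector (V i) (V (i + 1))) (hj : y ∈ sector (V j) (V (j + 1))) :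
    f i y = f j y := by
  have adjacent : ∀ i, ∀ y ∈ sector (V i) (V (i + 1)), y ∈ sector (V (i + 1)) (V (i + 1 + 1)) →
      f i y = f (i + 1) y := by
    intro i y h₁ h₂
    obtain ⟨t, ht, rfl⟩ := exists_eq_smul_of_mem_sector_of_mem_sector (wedge (V (i + 1)))
      (by rw [wedge_swap]; linarith [hV i]) (wedge_self _) (hV (i + 1)) h₁ h₂
    rw [hf _ _ ht, hf _ _ ht, hright, hleft]
  have hzero : ∀ k, f k 0 = 0 := fun k => by simpa using hf k 0 le_rfl 0
  obtain rfl | rfl | rfl | rfl :=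
    (by decide : ∀ k l : Fin 4, l = k ∨ l = k + 1 ∨ l = k + 2 ∨ l = k + 3) i j
  · rfl
  · exact adjacent i y hi hj
  · obtain rfl := hsep i y hi hj
    rw [hzero, hzero]
  · have h : i + 3 + 1 = i := (by decide : ∀ k : Fin 4, k + 3 + 1 = k) i
    simpa [h] using (adjacent (i + 3) y hj (by rwa [h])).symm

end CyclicSectors

section Contour

variable {a b Δ u₂ u₃ : ℝ} {T₂ T₃ : ℝ × ℝ}

def gradEₗ (a b : ℝ) : ℝ × ℝ →ₗ[ℝ] ℝ × ℝ where
  toFun := gradE a b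
  map_add' x y := by ext <;> simp only [gradE, Prod.fst_add, Prod.snd_add] <;> ring
  map_smul' r x := by
    ext <;> simp only [gradE, Prod.smul_fst, Prod.smul_snd, smul_eq_mul, RingHom.id_apply] <;> ring

lemma gradEₗ_injective (ha : 0 < a) (hb : 0 < b) : Injective (gradEₗ a b) := by
  refine (injective_iff_map_eq_zero _).2 fun y hy => ?_
  have h₁ := congrArg Prod.fst hy
  have h₂ := congrArg Prod.snd hy
  simp only [gradEₗ, gradE, LinearMap.coe_mk, AddHom.coe_mk, Prod.fst_zero, Prod.snd_zero] at h₁ h₂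
  have hdiff : y.1 - y.2 = 0 :=
    (mul_eq_zero.1 (show 2 * b * (y.1 - y.2) = 0 by linarith)).resolve_left (by positivity)
  have hy₁ : y.1 = 0 :=
    (mul_eq_zero.1 (show 2 * a * y.1 = 0 by linear_combination h₁ - 2 * b * hdiff)).resolve_left
      (by positivity)
  exact Prod.ext hy₁ (show y.2 = 0 by linarith)

lemma wedge_gradE (a b : ℝ) (u v : ℝ × ℝ) :
    wedge (gradE a b u) (gradE a b v) = 4 * a * b * wedge u v := by
  simp only [wedge_apply, gradE]; ring

lemma eF_pos (ha : 0 < a) (hb : 0 < b) {y : ℝ × ℝ} (hy : y ≠ 0) : 0 < eF a b y := by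
  rcases eq_or_ne y.1 0 with h | h
  · have : y.2 ≠ 0 := fun h' => hy (Prod.ext h h')
    simp only [eF, h]; positivity
  · unfold eF; positivity

lemma sqrt_eF_smul (a b : ℝ) {r : ℝ} (hr : 0 ≤ r) (y : ℝ × ℝ) :
    √(eF a b (r • y)) = r * √(eF a b y) := by
  have : eF a b (r • y) = r ^ 2 * eF a b y := by
    simp only [eF, Prod.smul_fst, Prod.smul_snd, smul_eq_mul]
    ring
  rw [this, Real.sqrt_mul (sq_nonneg r), Real.sqrt_sq hr]

/-- In `IsT2` and `IsT3` the multiple `c` in `∃ c > 0, gradE a b T = c • _` elaborates to a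
natural number. -/
lemma exists_real_smul_of_nat_smul {v w : ℝ × ℝ} (h : ∃ c : ℕ, c > 0 ∧ v = c • w) :
    ∃ c : ℝ, 0 < c ∧ v = c • w :=
  let ⟨c, hc, hv⟩ := h
  ⟨c, Nat.cast_pos.2 hc, by rw [hv, Nat.cast_smul_eq_nsmul]⟩

lemma IsT2.fst_neg (ha : 0 < a) (hΔ : 1 < Δ) (h : IsT2 a b Δ T₂) : T₂.1 < 0 := by
  obtain ⟨-, -, h⟩ := h
  obtain ⟨c, hc, hg⟩ := exists_real_smul_of_nat_smul h
  have h₁ := congrArg Prod.fst hg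
  have h₂ := congrArg Prod.snd hg
  simp only [gradE, Prod.smul_fst, Prod.smul_snd, smul_eq_mul] at h₁ h₂
  nlinarith

lemma wedge_neg_of_isT2_of_isT3 (ha : 0 < a) (hb : 0 < b) (hΔ : 1 < Δ) (h₂ : IsT2 a b Δ T₂)
    (h₃ : IsT3 a b Δ T₃) : wedge T₂ T₃ < 0 := by
  obtain ⟨c, hc, hg₂⟩ := exists_real_smul_of_nat_smul h₂.2.2
  obtain ⟨c', hc', hg₃⟩ := exists_real_smul_of_nat_smul h₃.2.2.2
  have key : 4 * a * b * wedge T₂ T₃ = -(c * c' * (Δ ^ 2 - 1)) := by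
    rw [← wedge_gradE, hg₂, hg₃]
    simp only [wedge_apply, Prod.smul_fst, Prod.smul_snd, smul_eq_mul]
    ring
  have hpos : 0 < c * c' * (Δ ^ 2 - 1) := mul_pos (mul_pos hc hc') (by nlinarith)
  by_contra! hw
  nlinarith [mul_nonneg (by positivity : (0 : ℝ) ≤ 4 * a * b) hw]

lemma arcE_eq (ha : 0 < a) (hb : 0 < b) (h₂ : IsT2 a b Δ T₂) (h₃ : IsT3 a b Δ T₃) :
    arcE a b Δ = sector T₂ T₃ ∩ {y | √(eF a b y) = 1} := by
  obtain ⟨c, hc, hg₂⟩ := exists_real_smul_of_nat_smul h₂.2.2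
  obtain ⟨c', hc', hg₃⟩ := exists_real_smul_of_nat_smul h₃.2.2.2
  have hcone : sector ((1, -Δ) : ℝ × ℝ) (-Δ, 1) = sector (gradEₗ a b T₂) (gradEₗ a b T₃) := by
    rw [show gradEₗ a b T₂ = gradE a b T₂ from rfl, show gradEₗ a b T₃ = gradE a b T₃ from rfl,
      hg₂, hg₃, sector_smul_smul hc hc']
  ext y
  change eF a b y = 1 ∧ gradEₗ a b y ∈ sector ((1, -Δ) : ℝ × ℝ) (-Δ, 1) ↔ _
  rw [hcone, map_mem_sector_iff _ (gradEₗ_injective ha hb), mem_inter_iff, mem_ofPred_eq,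
    Real.sqrt_eq_one, and_comm]

/-- Sector `i`, spanned by the vertices `i` and `i + 1` (indices mod 4), carries the `i`-th piece
of `contourL`, which is cut out there by `contourGauge … i = 1`. -/
def contourVertex (u₂ u₃ : ℝ) (T₂ T₃ : ℝ × ℝ) : Fin 4 → ℝ × ℝ := ![(0, u₃), (u₂, 0), T₂, T₃]

def contourGauge (a b u₂ u₃ : ℝ) (T₂ T₃ : ℝ × ℝ) : Fin 4 → ℝ × ℝ → ℝ :=
  ![sectorGauge (0, u₃) (u₂, 0), sectorGauge (u₂, 0) T₂, fun y => √(eF a b y),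
    sectorGauge T₃ (0, u₃)]

lemma GoodConfig.wedge_neg (ha : 0 < a) (hb : 0 < b) (hΔ : 1 < Δ)
    (hcfg : GoodConfig a b Δ u₂ u₃ T₂ T₃) :
    wedge (0, u₃) (u₂, 0) < 0 ∧ wedge (u₂, 0) T₂ < 0 ∧ wedge T₂ T₃ < 0 ∧ wedge T₃ (0, u₃) < 0 := by
  obtain ⟨h₂, h₃, hu₂, hu₃, -, -⟩ := hcfg
  refine ⟨?_, ?_, wedge_neg_of_isT2_of_isT3 ha hb hΔ h₂ h₃, ?_⟩ <;> simp only [wedge_apply]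
  · nlinarith
  · nlinarith [h₂.2.1]
  · nlinarith [h₃.2.1]

lemma GoodConfig.wedge_contourVertex_neg (ha : 0 < a) (hb : 0 < b) (hΔ : 1 < Δ)
    (hcfg : GoodConfig a b Δ u₂ u₃ T₂ T₃) (i : Fin 4) :
    wedge (contourVertex u₂ u₃ T₂ T₃ i) (contourVertex u₂ u₃ T₂ T₃ (i + 1)) < 0 := by
  obtain ⟨h₀, h₁, h₂, h₃⟩ := hcfg.wedge_neg ha hb hΔ
  fin_cases i <;> simpa [contourVertex]

lemma GoodConfig.contourL_eq_iUnion (ha : 0 < a) (hb : 0 < b) (hΔ : 1 < Δ)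
    (hcfg : GoodConfig a b Δ u₂ u₃ T₂ T₃) :
    contourL a b Δ u₂ u₃ T₂ T₃ = ⋃ i, sector (contourVertex u₂ u₃ T₂ T₃ i)
      (contourVertex u₂ u₃ T₂ T₃ (i + 1)) ∩ {y | contourGauge a b u₂ u₃ T₂ T₃ i y = 1} := by
  obtain ⟨h₀, h₁, -, h₃⟩ := hcfg.wedge_neg ha hb hΔ
  rw [contourL, segment_eq_sector_inter _ (sectorGauge_left h₀.ne) (sectorGauge_right h₀.ne),
    segment_eq_sector_inter _ (sectorGauge_left h₁.ne) (sectorGauge_right h₁.ne),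
    segment_eq_sector_inter _ (sectorGauge_left h₃.ne) (sectorGauge_right h₃.ne),
    arcE_eq ha hb hcfg.1 hcfg.2.1]
  ext y
  simp [Fin.exists_fin_succ, contourVertex, contourGauge, or_assoc]

lemma GoodConfig.exists_mem_sector (ha : 0 < a) (hb : 0 < b) (hΔ : 1 < Δ)
    (hcfg : GoodConfig a b Δ u₂ u₃ T₂ T₃) (y : ℝ × ℝ) :
    ∃ i, y ∈ sector (contourVertex u₂ u₃ T₂ T₃ i) (contourVertex u₂ u₃ T₂ T₃ (i + 1)) := by
  have hV := hcfg.wedge_contourVertex_neg ha hb hΔ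
  obtain ⟨-, ⟨-, hT₁, hT₂, -⟩, hu₂, hu₃, -, -⟩ := hcfg
  have not_all_pos : ∀ x : ℝ × ℝ, ¬∀ i, 0 < wedge (contourVertex u₂ u₃ T₂ T₃ i) x := by
    intro x h
    have h₀ := h 0
    have h₁ := h 1
    have h₃ := h 3
    simp only [contourVertex, wedge_apply, Matrix.cons_val] at h₀ h₁ h₃
    have hx₁ : x.1 < 0 := by nlinarith
    have hx₂ : 0 < x.2 := by nlinarith
    nlinarith [mul_pos_of_neg_of_neg hT₂ hx₁, mul_neg_of_neg_of_pos hT₁ hx₂]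
  refine exists_mem_sector_of_wedge _ hV (not_all_pos y) fun h => not_all_pos (-y) fun i => ?_
  simpa using h i

lemma GoodConfig.eq_zero_of_mem_opposite_sectors (ha : 0 < a) (hb : 0 < b) (hΔ : 1 < Δ)
    (hcfg : GoodConfig a b Δ u₂ u₃ T₂ T₃) (i : Fin 4) {y : ℝ × ℝ}
    (h : y ∈ sector (contourVertex u₂ u₃ T₂ T₃ i) (contourVertex u₂ u₃ T₂ T₃ (i + 1)))
    (h' : y ∈ sector (contourVertex u₂ u₃ T₂ T₃ (i + 2)) (contourVertex u₂ u₃ T₂ T₃ (i + 2 + 1))) :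
    y = 0 := by
  obtain ⟨h₂, h₃, hu₂, hu₃, -, -⟩ := hcfg
  have hT₂₁ := h₂.fst_neg ha hΔ
  have hT₂₂ := h₂.2.1
  have hT₃₁ := h₃.2.1
  have hT₃₂ := h₃.2.2.1
  have hsum : y ∈ sector (0, u₃) (u₂, 0) → y ∈ sector T₂ T₃ → y = 0 :=
    eq_zero_of_mem_sector_of_mem_sector (LinearMap.fst ℝ ℝ ℝ + LinearMap.snd ℝ ℝ ℝ)
      (by simp [hu₃.le]) (by simp [hu₂.le]) (by simp; linarith) (by simp; linarith)
  have hwedge : y ∈ sector (u₂, 0) T₂ → y ∈ sector T₃ (0, u₃) → y = 0 :=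
    eq_zero_of_mem_sector_of_mem_sector (wedge T₂) (by simp only [wedge_apply]; nlinarith)
      (wedge_self T₂).ge (wedge_neg_of_isT2_of_isT3 ha hb hΔ h₂ h₃)
      (by simp only [wedge_apply]; nlinarith)
  fin_cases i <;> simp [contourVertex] at h h'
  · exact hsum h h'
  · exact hwedge h h'
  · exact hsum h' h
  · exact hwedge h' h

lemma contourGauge_smul (i : Fin 4) {r : ℝ} (hr : 0 ≤ r) (y : ℝ × ℝ) :
    contourGauge a b u₂ u₃ T₂ T₃ i (r • y) = r * contourGauge a b u₂ u₃ T₂ T₃ i y := by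
  fin_cases i <;> simp [contourGauge, sqrt_eF_smul _ _ hr]

lemma GoodConfig.contourGauge_pos (ha : 0 < a) (hb : 0 < b) (hΔ : 1 < Δ)
    (hcfg : GoodConfig a b Δ u₂ u₃ T₂ T₃) (i : Fin 4) {y : ℝ × ℝ}
    (hy : y ∈ sector (contourVertex u₂ u₃ T₂ T₃ i) (contourVertex u₂ u₃ T₂ T₃ (i + 1)))
    (hy₀ : y ≠ 0) : 0 < contourGauge a b u₂ u₃ T₂ T₃ i y := by
  obtain ⟨h₀, h₁, -, h₃⟩ := hcfg.wedge_neg ha hb hΔ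
  have gauge_pos : ∀ {A B : ℝ × ℝ}, wedge A B ≠ 0 → y ∈ sector A B → 0 < sectorGauge A B y :=
    fun h hy => pos_of_mem_sector _ (by rw [sectorGauge_left h]; exact one_pos)
      (by rw [sectorGauge_right h]; exact one_pos) hy hy₀
  fin_cases i <;> simp only [contourVertex, contourGauge] at hy ⊢
  · exact gauge_pos h₀.ne hy
  · exact gauge_pos h₁.ne hy
  · exact Real.sqrt_pos.2 (eF_pos ha hb hy₀)
  · exact gauge_pos h₃.ne hy

lemma GoodConfig.contourGauge_vertex (ha : 0 < a) (hb : 0 < b) (hΔ : 1 < Δ)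
    (hcfg : GoodConfig a b Δ u₂ u₃ T₂ T₃) (i : Fin 4) :
    contourGauge a b u₂ u₃ T₂ T₃ i (contourVertex u₂ u₃ T₂ T₃ i) = 1 ∧
      contourGauge a b u₂ u₃ T₂ T₃ i (contourVertex u₂ u₃ T₂ T₃ (i + 1)) = 1 := by
  obtain ⟨h₀, h₁, -, h₃⟩ := hcfg.wedge_neg ha hb hΔ
  fin_cases i <;> simp [contourVertex, contourGauge, sectorGauge_left, sectorGauge_right, h₀.ne,
    h₁.ne, h₃.ne, hcfg.1.1, hcfg.2.1.1]

theorem GoodConfig.existsUnique_inv_smul_mem_contourL (ha : 0 < a) (hb : 0 < b) (hΔ : 1 < Δ)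
    (hcfg : GoodConfig a b Δ u₂ u₃ T₂ T₃) {y : ℝ × ℝ} (hy : y ≠ 0) :
    ∃! r : ℝ, 0 < r ∧ r⁻¹ • y ∈ contourL a b Δ u₂ u₃ T₂ T₃ := by
  have hsmul : ∀ i, ∀ r : ℝ, 0 ≤ r → ∀ x, contourGauge a b u₂ u₃ T₂ T₃ i (r • x) =
      r * contourGauge a b u₂ u₃ T₂ T₃ i x := fun i _ hr x => contourGauge_smul i hr x
  have hvertex := hcfg.contourGauge_vertex ha hb hΔ
  have hcompat := eq_of_mem_sector_of_mem_sector _ _ (hcfg.wedge_contourVertex_neg ha hb hΔ)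
    (fun i _ => hcfg.eq_zero_of_mem_opposite_sectors ha hb hΔ i) hsmul (fun i => (hvertex i).1)
    (fun i => (hvertex i).2)
  rw [hcfg.contourL_eq_iUnion ha hb hΔ]
  exact existsUnique_inv_smul_mem_iUnion (hcfg.exists_mem_sector ha hb hΔ)
    (fun _ _ hr _ => smul_mem_sector hr) hsmul (fun i _ => hcfg.contourGauge_pos ha hb hΔ i)
    (fun i j _ => hcompat i j) hy

theorem GoodConfig.zero_notMem_contourL (ha : 0 < a) (hb : 0 < b) (hΔ : 1 < Δ)
    (hcfg : GoodConfig a b Δ u₂ u₃ T₂ T₃) : (0 : ℝ × ℝ) ∉ contourL a b Δ u₂ u₃ T₂ T₃ := by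
  rw [hcfg.contourL_eq_iUnion ha hb hΔ]
  exact zero_notMem_iUnion fun _ _ hr _ => contourGauge_smul _ hr _

end Contour

/-- for all sufficiently large `Δ`, the function `φ` is well defined
(for every `y ≠ 0` there is a unique `r > 0` with `y/r ∈ L`), and any function `φ`
with `φ(0) = 0`, `φ(y) > 0` and `y/φ(y) ∈ L` for `y ≠ 0` satisfies: `φ ≥ 0`,
`φ(y) > 0` for `y ≠ 0`, `φ(r·y) = r·φ(y)` for `r > 0`, and `{φ = 1} = L`. -/
theorem stmt3 (a b : ℝ) (ha : 0 < a) (hb : 0 < b) :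
    ∃ Δ₀ > (0 : ℝ), ∀ Δ > Δ₀, ∀ u₂ u₃ : ℝ, ∀ T₂ T₃ : ℝ × ℝ,
      GoodConfig a b Δ u₂ u₃ T₂ T₃ →
      (∀ y : ℝ × ℝ, y ≠ 0 → ∃! r : ℝ, 0 < r ∧ r⁻¹ • y ∈ contourL a b Δ u₂ u₃ T₂ T₃) ∧
      (∀ φ : ℝ × ℝ → ℝ, IsPhi (contourL a b Δ u₂ u₃ T₂ T₃) φ →
        (∀ y : ℝ × ℝ, 0 ≤ φ y) ∧ (∀ y : ℝ × ℝ, y ≠ 0 → 0 < φ y) ∧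
        (∀ r : ℝ, 0 < r → ∀ y : ℝ × ℝ, φ (r • y) = r * φ y) ∧
        {y : ℝ × ℝ | φ y = 1} = contourL a b Δ u₂ u₃ T₂ T₃) := by
  refine ⟨1, one_pos, fun Δ hΔ u₂ u₃ T₂ T₃ hcfg => ?_⟩
  have hL : ∀ y : ℝ × ℝ, y ≠ 0 → ∃! r : ℝ, 0 < r ∧ r⁻¹ • y ∈ contourL a b Δ u₂ u₃ T₂ T₃ :=
    fun y => hcfg.existsUnique_inv_smul_mem_contourL ha hb hΔ
  refine ⟨hL, fun φ hφ => ⟨hφ.nonneg, fun y hy => (hφ.2 y hy).1, fun r hr => hφ.map_smul hL hr,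
    hφ.setOf_eq_one hL (hcfg.zero_notMem_contourL ha hb hΔ)⟩⟩
end
end

section
/- Assume λ₁<λ₂ and λ₁<λ₃. Then there exists Δ₀>0 such that for every Δ>Δ₀ (with the contour L and the function φ constructed for this Δ) there exist constants C>0 and ε>0 with the following properties for every y=(y₂,y₃)∈ℤ² satisfying min(y₂,y₃)<0 and φ(y)>C: (a) Σ_z r_{yz}·(φ(z)−φ(y)) ≤ 0, where the sum is over all rollback transitions from y; (b) φ(y+(λ₂−λ₁, λ₃−λ₁)) − φ(y) < −5ε. -/
noncomputable section

/-- Coercion of an integer lattice point to `ℝ × ℝ`. -/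
def iv (y : ℤ × ℤ) : ℝ × ℝ := ((y.1 : ℝ), (y.2 : ℝ))

/-- Free-dynamics part `s_{yz}` of the transition probabilities of the embedded
relative-coordinate chain of the three-processor cascade model. -/
def sker (l1 l2 l3 : ℝ) (y z : ℤ × ℤ) : ℝ :=
  (if z = y + (1, 0) then l2 else 0) + (if z = y + (0, 1) then l3 else 0) +
    (if z = y - (1, 1) then l1 else 0)

/-- Rollback part `r_{yz}` of the transition probabilities of the embedded
relative-coordinate chain of the three-processor cascade model
(`b2 = λ₂/(λ₂+β₁₂)`). -/
def rker (b12 b23 b2 : ℝ) (y z : ℤ × ℤ) : ℝ :=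
  (if 0 < y.1 ∧ y.2 ≤ 0 ∧ z = (0, y.2) then b12 else 0) +
  (if y.1 < y.2 ∧ z = (y.1, y.1) then b23 else 0) +
  (if 0 < y.2 ∧ y.2 ≤ y.1 ∧ z.1 = 0 ∧ 0 ≤ z.2 ∧ z.2 < y.2 then
      b12 * (1 - b2) ^ z.2.toNat * b2 else 0) +
  (if 0 < y.2 ∧ y.2 ≤ y.1 ∧ z = (0, y.2) then b12 * (1 - b2) ^ y.2.toNat else 0) +
  (if 0 < y.1 ∧ y.1 < y.2 ∧ z.1 = 0 ∧ 0 ≤ z.2 ∧ z.2 ≤ y.1 then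
      b12 * (1 - b2) ^ z.2.toNat * b2 else 0) +
  (if 0 < y.1 ∧ y.1 < y.2 ∧ z = (0, y.2) then b12 * (1 - b2) ^ (y.1.toNat + 1) else 0)

/-- Total transition probability `p_{yz}` of the embedded relative-coordinate chain:
for `z ≠ y` it is `s_{yz} + r_{yz}`, and the remaining probability mass is assigned
to staying at `y`. -/
def pker (l1 l2 l3 b12 b23 b2 : ℝ) (y z : ℤ × ℤ) : ℝ :=
  sker l1 l2 l3 y z + rker b12 b23 b2 y z +
    (if z = y then 1 - ∑' w : ℤ × ℤ, (sker l1 l2 l3 y w + rker b12 b23 b2 y w) else 0)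

/-!
The contour `L` bounds a convex region, so `φ` is its gauge: every supporting line
`n ⬝ x ≤ h` of `L` gives `n ⬝ x ≤ h φ(x)` everywhere, with equality along the ray through
the contact point. All three estimates are read off such lines. The line through `K₂T₂`
has normal `(1, −Δ)` and the one through `T₃K₃` has normal `(−Δ, 1)`; on the elliptic arc
the tangent line at `q` has normal `∇e(q)`, a nonnegative combination of these two. Since
`(λ₂ − λ₁, λ₃ − λ₁)` has positive coordinates, for `Δ` large its pairing with both normals
is negative, which gives (b). For (a), when `min(y₂, y₃) < 0` only the two rollback moves
`y ↦ (0, y₃)` (for `y₂ > 0`) and `y ↦ (y₂, y₂)` (for `y₂ < y₃`) are possible; the image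
of the first lies on the ray of `K₂T₂`, where moving `y₂` to `0` decreases `(1, −Δ) ⬝ y`,
and the image of the second lies on the ray of the arc point where `∇e` is horizontal.
-/

lemma dotp_isLinearMap (n : ℝ × ℝ) : IsLinearMap ℝ (dotp n) where
  map_add x y := by simp only [dotp, Prod.fst_add, Prod.snd_add]; ring
  map_smul c x := by simp only [dotp, Prod.smul_fst, Prod.smul_snd, smul_eq_mul]; ring

lemma dotp_sub_right (n x y : ℝ × ℝ) : dotp n (x - y) = dotp n x - dotp n y :=
  (dotp_isLinearMap n).map_sub x y

lemma dotp_smul_right (n : ℝ × ℝ) (c : ℝ) (x : ℝ × ℝ) : dotp n (c • x) = c * dotp n x :=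
  (dotp_isLinearMap n).map_smul c x

lemma dotp_smul_left (c : ℝ) (n x : ℝ × ℝ) : dotp (c • n) x = c * dotp n x := by
  simp only [dotp, Prod.smul_fst, Prod.smul_snd, smul_eq_mul]; ring

lemma dotp_smul_add_smul_left (c₂ c₃ : ℝ) (n₂ n₃ x : ℝ × ℝ) :
    dotp (c₂ • n₂ + c₃ • n₃) x = c₂ * dotp n₂ x + c₃ * dotp n₃ x := by
  simp only [dotp, Prod.fst_add, Prod.snd_add, Prod.smul_fst, Prod.smul_snd, smul_eq_mul]
  ring

section Gauge

variable {L : Set (ℝ × ℝ)} {φ : ℝ × ℝ → ℝ} {n : ℝ × ℝ} {h : ℝ}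

lemma IsPhi.dotp_le (hφ : IsPhi L φ) (hL : ∀ x ∈ L, dotp n x ≤ h) (y : ℝ × ℝ) :
    dotp n y ≤ h * φ y := by
  rcases eq_or_ne y 0 with rfl | hy
  · simp [hφ.1, dotp]
  · obtain ⟨hpos, hmem⟩ := hφ.2 y hy
    have := hL _ hmem
    rw [dotp_smul_right, inv_mul_le_iff₀ hpos] at this
    linarith

lemma IsPhi.mul_sub_le_dotp (hφ : IsPhi L φ) (hL : ∀ x ∈ L, dotp n x ≤ h) {w : ℝ × ℝ}
    (hw : w ≠ 0) (hcontact : dotp n ((φ w)⁻¹ • w) = h) (y : ℝ × ℝ) :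
    h * (φ w - φ y) ≤ dotp n (w - y) := by
  have hw' : dotp n w = h * φ w := by
    rw [← hcontact, dotp_smul_right]
    field_simp [(hφ.2 w hw).1.ne']
  rw [dotp_sub_right, hw']
  linarith [hφ.dotp_le hL y]

end Gauge

lemma dotp_gradE_self (a b : ℝ) (p : ℝ × ℝ) : dotp (gradE a b p) p = 2 * eF a b p := by
  simp only [dotp, gradE, eF]; ring

section Ellipse

variable {a b Δ : ℝ}

lemma dotp_gradE_le_two_of_eF_eq_one (ha : 0 ≤ a) (hb : 0 ≤ b) {p x : ℝ × ℝ} (hp : eF a b p = 1)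
    (hx : eF a b x = 1) : dotp (gradE a b p) x ≤ 2 := by
  have htaylor : eF a b x = eF a b p + dotp (gradE a b p) (x - p) + eF a b (x - p) := by
    simp only [eF, gradE, dotp, Prod.fst_sub, Prod.snd_sub]; ring
  have hrem : 0 ≤ eF a b (x - p) := by unfold eF; positivity
  rw [dotp_sub_right, dotp_gradE_self] at htaylor
  linarith

lemma dotp_le_of_gradE_eq_smul (ha : 0 ≤ a) (hb : 0 ≤ b) {p n : ℝ × ℝ} {c : ℝ} (hc : 0 < c)
    (hp : eF a b p = 1) (hg : gradE a b p = c • n) {x : ℝ × ℝ} (hx : eF a b x = 1) :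
    dotp n x ≤ dotp n p := by
  have hx' := dotp_gradE_le_two_of_eF_eq_one ha hb hp hx
  have hp' := dotp_gradE_self a b p
  rw [hp, hg, dotp_smul_left] at hp'
  rw [hg, dotp_smul_left] at hx'
  exact le_of_mul_le_mul_left (by linarith) hc

lemma arcE_fst_neg (ha : 0 < a) (hb : 0 < b) (hΔ : 1 < Δ) {x : ℝ × ℝ} (hx : x ∈ arcE a b Δ) :
    x.1 < 0 := by
  obtain ⟨hxe, c₂, c₃, hc₂, hc₃, hg⟩ := hx
  have hg₁ := congrArg Prod.fst hg
  have hg₂ := congrArg Prod.snd hg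
  simp only [gradE, Prod.fst_add, Prod.snd_add, Prod.smul_fst, Prod.smul_snd,
    smul_eq_mul] at hg₁ hg₂
  by_contra! hx₁
  have hc : c₂ + c₃ = 0 := by nlinarith
  have hd : x.1 - x.2 = 0 := by nlinarith
  have hx₁' : x.1 = 0 := by nlinarith
  have : eF a b x = 0 := by rw [eF, hd, hx₁']; ring
  linarith

-- The multiple `c` in `IsT2` and `IsT3` elaborates as a natural number.
lemma IsT2.exists_gradE_eq {T : ℝ × ℝ} (hT : IsT2 a b Δ T) :
    ∃ c : ℝ, 0 < c ∧ gradE a b T = c • ((1, -Δ) : ℝ × ℝ) := by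
  obtain ⟨-, -, c, hc, hg⟩ := hT
  exact ⟨c, Nat.cast_pos.mpr hc, by rw [hg, Nat.cast_smul_eq_nsmul]⟩

lemma IsT3.exists_gradE_eq {T : ℝ × ℝ} (hT : IsT3 a b Δ T) :
    ∃ c : ℝ, 0 < c ∧ gradE a b T = c • ((-Δ, 1) : ℝ × ℝ) := by
  obtain ⟨-, -, -, c, hc, hg⟩ := hT
  exact ⟨c, Nat.cast_pos.mpr hc, by rw [hg, Nat.cast_smul_eq_nsmul]⟩

end Ellipse

lemma nonneg_of_mem_segment {u₂ u₃ : ℝ} (hu₂ : 0 ≤ u₂) (hu₃ : 0 ≤ u₃) {x : ℝ × ℝ}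
    (hx : x ∈ segment ℝ ((0, u₃) : ℝ × ℝ) ((u₂, 0) : ℝ × ℝ)) : 0 ≤ x.1 ∧ 0 ≤ x.2 :=
  (convex_Ici 0).segment_subset (show (0 : ℝ × ℝ) ≤ (0, u₃) from ⟨le_rfl, hu₃⟩)
    (show (0 : ℝ × ℝ) ≤ (u₂, 0) from ⟨hu₂, le_rfl⟩) hx

namespace GoodConfig

variable {a b Δ u₂ u₃ : ℝ} {T₂ T₃ : ℝ × ℝ}

lemma u₂_pos (hcfg : GoodConfig a b Δ u₂ u₃ T₂ T₃) : 0 < u₂ := hcfg.2.2.1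

lemma u₃_pos (hcfg : GoodConfig a b Δ u₂ u₃ T₂ T₃) : 0 < u₃ := hcfg.2.2.2.1

lemma T₂_mem_arcE (hcfg : GoodConfig a b Δ u₂ u₃ T₂ T₃) : T₂ ∈ arcE a b Δ := by
  obtain ⟨c, hc, hg⟩ := hcfg.1.exists_gradE_eq
  exact ⟨hcfg.1.1, c, 0, hc.le, le_rfl, by rw [hg, zero_smul, add_zero]⟩

lemma T₃_mem_arcE (hcfg : GoodConfig a b Δ u₂ u₃ T₂ T₃) : T₃ ∈ arcE a b Δ := by
  obtain ⟨c, hc, hg⟩ := hcfg.2.1.exists_gradE_eq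
  exact ⟨hcfg.2.1.1, 0, c, le_rfl, hc.le, by rw [hg, zero_smul, zero_add]⟩

lemma dotp_T₂ (hcfg : GoodConfig a b Δ u₂ u₃ T₂ T₃) : dotp (1, -Δ) T₂ = u₂ := by
  obtain ⟨c, hc, hg⟩ := hcfg.1.exists_gradE_eq
  have htangent := hcfg.2.2.2.2.1
  rw [hg, dotp_smul_left, dotp_sub_right] at htangent
  have : dotp (1, -Δ) ((u₂, 0) : ℝ × ℝ) = u₂ := by simp [dotp]
  linarith [(mul_eq_zero.mp htangent).resolve_left hc.ne']

lemma dotp_T₃ (hcfg : GoodConfig a b Δ u₂ u₃ T₂ T₃) : dotp (-Δ, 1) T₃ = u₃ := by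
  obtain ⟨c, hc, hg⟩ := hcfg.2.1.exists_gradE_eq
  have htangent := hcfg.2.2.2.2.2
  rw [hg, dotp_smul_left, dotp_sub_right] at htangent
  have : dotp (-Δ, 1) ((0, u₃) : ℝ × ℝ) = u₃ := by simp [dotp]
  linarith [(mul_eq_zero.mp htangent).resolve_left hc.ne']

lemma T₂_snd_lt_fst (hb : 0 < b) (hΔ : 0 < Δ) (hcfg : GoodConfig a b Δ u₂ u₃ T₂ T₃) :
    T₂.2 < T₂.1 := by
  obtain ⟨c, hc, hg⟩ := hcfg.1.exists_gradE_eq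
  have hg₂ := congrArg Prod.snd hg
  simp only [gradE, Prod.smul_snd, smul_eq_mul] at hg₂
  nlinarith [mul_pos hc hΔ]

lemma T₃_fst_lt_snd (hb : 0 < b) (hcfg : GoodConfig a b Δ u₂ u₃ T₂ T₃) : T₃.1 < T₃.2 := by
  obtain ⟨c, hc, hg⟩ := hcfg.2.1.exists_gradE_eq
  have hg₂ := congrArg Prod.snd hg
  simp only [gradE, Prod.smul_snd, smul_eq_mul] at hg₂
  nlinarith

lemma dotp_le_of_arcE (hcfg : GoodConfig a b Δ u₂ u₃ T₂ T₃) {n : ℝ × ℝ} {h : ℝ}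
    (harc : ∀ x ∈ arcE a b Δ, dotp n x ≤ h) (hK₂ : dotp n (u₂, 0) ≤ h)
    (hK₃ : dotp n (0, u₃) ≤ h) : ∀ x ∈ contourL a b Δ u₂ u₃ T₂ T₃, dotp n x ≤ h := by
  have hconv := convex_halfSpace_le (dotp_isLinearMap n) h
  rintro x (((hx | hx) | hx) | hx)
  · exact hconv.segment_subset hK₃ hK₂ hx
  · exact hconv.segment_subset hK₂ (harc _ hcfg.T₂_mem_arcE) hx
  · exact harc x hx
  · exact hconv.segment_subset (harc _ hcfg.T₃_mem_arcE) hK₃ hx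

lemma dotp_le_u₂ (ha : 0 < a) (hb : 0 < b) (hΔ : 0 ≤ Δ)
    (hcfg : GoodConfig a b Δ u₂ u₃ T₂ T₃) :
    ∀ x ∈ contourL a b Δ u₂ u₃ T₂ T₃, dotp (1, -Δ) x ≤ u₂ := by
  obtain ⟨c, hc, hg⟩ := hcfg.1.exists_gradE_eq
  refine hcfg.dotp_le_of_arcE (fun x hx => ?_) (by simp [dotp]) ?_
  · rw [← hcfg.dotp_T₂]
    exact dotp_le_of_gradE_eq_smul ha.le hb.le hc hcfg.1.1 hg hx.1
  · simp only [dotp]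
    nlinarith [hcfg.u₂_pos, hcfg.u₃_pos]

lemma dotp_le_u₃ (ha : 0 < a) (hb : 0 < b) (hΔ : 0 ≤ Δ)
    (hcfg : GoodConfig a b Δ u₂ u₃ T₂ T₃) :
    ∀ x ∈ contourL a b Δ u₂ u₃ T₂ T₃, dotp (-Δ, 1) x ≤ u₃ := by
  obtain ⟨c, hc, hg⟩ := hcfg.2.1.exists_gradE_eq
  refine hcfg.dotp_le_of_arcE (fun x hx => ?_) ?_ (by simp [dotp])
  · rw [← hcfg.dotp_T₃]
    exact dotp_le_of_gradE_eq_smul ha.le hb.le hc hcfg.2.1.1 hg hx.1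
  · simp only [dotp]
    nlinarith [hcfg.u₂_pos, hcfg.u₃_pos]

-- `K₂ - T₂ = -T₂.2 • (Δ, 1)` and `(-Δ, 1) ⬝ (Δ, 1) = 1 - Δ² ≤ 0`; symmetrically at `K₃`.
lemma dotp_gradE_le_two (ha : 0 < a) (hb : 0 < b) (hΔ : 1 ≤ Δ)
    (hcfg : GoodConfig a b Δ u₂ u₃ T₂ T₃) {q : ℝ × ℝ} (hq : q ∈ arcE a b Δ) :
    ∀ x ∈ contourL a b Δ u₂ u₃ T₂ T₃, dotp (gradE a b q) x ≤ 2 := by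
  obtain ⟨hqe, c₂, c₃, hc₂, hc₃, hg⟩ := hq
  have harc : ∀ x ∈ arcE a b Δ, dotp (gradE a b q) x ≤ 2 :=
    fun x hx => dotp_gradE_le_two_of_eF_eq_one ha.le hb.le hqe hx.1
  have hT₂ := harc _ hcfg.T₂_mem_arcE
  have hT₃ := harc _ hcfg.T₃_mem_arcE
  have hu₂ := hcfg.dotp_T₂
  have hu₃ := hcfg.dotp_T₃
  rw [hg] at harc hT₂ hT₃ ⊢
  refine hcfg.dotp_le_of_arcE harc ?_ ?_ <;> rw [dotp_smul_add_smul_left] at hT₂ hT₃ ⊢ <;>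
    simp only [dotp] at hu₂ hu₃ hT₂ hT₃ ⊢
  · rw [← hu₂]
    linarith [mul_nonneg hc₃ (mul_nonneg (neg_nonneg.mpr hcfg.1.2.1.le)
      (sub_nonneg.mpr (one_le_pow₀ (n := 2) hΔ)))]
  · rw [← hu₃]
    linarith [mul_nonneg hc₂ (mul_nonneg (neg_nonneg.mpr hcfg.2.1.2.1.le)
      (sub_nonneg.mpr (one_le_pow₀ (n := 2) hΔ)))]

lemma dotp_eq_u₂_of_mem_segment (hcfg : GoodConfig a b Δ u₂ u₃ T₂ T₃) {x : ℝ × ℝ}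
    (hx : x ∈ segment ℝ ((u₂, 0) : ℝ × ℝ) T₂) : dotp (1, -Δ) x = u₂ :=
  (convex_hyperplane (dotp_isLinearMap _) u₂).segment_subset (by simp [dotp]) hcfg.dotp_T₂ hx

lemma dotp_eq_u₃_of_mem_segment (hcfg : GoodConfig a b Δ u₂ u₃ T₂ T₃) {x : ℝ × ℝ}
    (hx : x ∈ segment ℝ T₃ ((0, u₃) : ℝ × ℝ)) : dotp (-Δ, 1) x = u₃ :=
  (convex_hyperplane (dotp_isLinearMap _) u₃).segment_subset hcfg.dotp_T₃ (by simp [dotp]) hx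

lemma dotp_eq_u₂_of_fst_eq_zero (ha : 0 < a) (hb : 0 < b) (hΔ : 1 < Δ)
    (hcfg : GoodConfig a b Δ u₂ u₃ T₂ T₃) {q : ℝ × ℝ} (hq : q ∈ contourL a b Δ u₂ u₃ T₂ T₃)
    (hq₁ : q.1 = 0) (hq₂ : q.2 < 0) : dotp (1, -Δ) q = u₂ := by
  rcases hq with ((hq | hq) | hq) | hq
  · linarith [(nonneg_of_mem_segment hcfg.u₂_pos.le hcfg.u₃_pos.le hq).2]
  · exact hcfg.dotp_eq_u₂_of_mem_segment hq
  · linarith [arcE_fst_neg ha hb hΔ hq]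
  · have := hcfg.dotp_eq_u₃_of_mem_segment hq
    simp only [dotp, hq₁] at this
    linarith [hcfg.u₃_pos]

lemma mem_arcE_of_fst_eq_snd (hb : 0 < b) (hΔ : 0 < Δ) (hcfg : GoodConfig a b Δ u₂ u₃ T₂ T₃)
    {q : ℝ × ℝ} (hq : q ∈ contourL a b Δ u₂ u₃ T₂ T₃) (hq₁₂ : q.1 = q.2) (hq₁ : q.1 < 0) :
    q ∈ arcE a b Δ := by
  rcases hq with ((hq | hq) | hq) | hq
  · linarith [(nonneg_of_mem_segment hcfg.u₂_pos.le hcfg.u₃_pos.le hq).1]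
  · have : 0 < dotp (1, -1) q := (convex_halfSpace_gt (dotp_isLinearMap _) 0).segment_subset
      (by simp [dotp, hcfg.u₂_pos]) (by simp [dotp, hcfg.T₂_snd_lt_fst hb hΔ]) hq
    simp only [dotp] at this
    linarith
  · exact hq
  · have : 0 < dotp (-1, 1) q := (convex_halfSpace_gt (dotp_isLinearMap _) 0).segment_subset
      (by simp [dotp, hcfg.T₃_fst_lt_snd hb]) (by simp [dotp, hcfg.u₃_pos]) hq
    simp only [dotp] at this
    linarith

lemma exists_supportingLine (ha : 0 < a) (hb : 0 < b) (hΔ : 1 < Δ)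
    (hcfg : GoodConfig a b Δ u₂ u₃ T₂ T₃) {q : ℝ × ℝ} (hq : q ∈ contourL a b Δ u₂ u₃ T₂ T₃)
    (hneg : q.1 < 0 ∨ q.2 < 0) :
    ∃ c₂ c₃ h : ℝ, 0 ≤ c₂ ∧ 0 ≤ c₃ ∧ 0 < h ∧ h ≤ (c₂ + c₃) * (u₂ + u₃) ∧
      dotp (c₂ • (1, -Δ) + c₃ • (-Δ, 1)) q = h ∧
      ∀ x ∈ contourL a b Δ u₂ u₃ T₂ T₃, dotp (c₂ • (1, -Δ) + c₃ • (-Δ, 1)) x ≤ h := by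
  have hu₂ := hcfg.u₂_pos
  have hu₃ := hcfg.u₃_pos
  have hqL := hq
  rcases hq with ((hq | hq) | hq) | hq
  · obtain ⟨hq₁, hq₂⟩ := nonneg_of_mem_segment hcfg.u₂_pos.le hcfg.u₃_pos.le hq
    rcases hneg with h | h <;> linarith
  · refine ⟨1, 0, u₂, zero_le_one, le_rfl, hu₂, by linarith, ?_, ?_⟩ <;>
      simp only [one_smul, zero_smul, add_zero]
    · exact hcfg.dotp_eq_u₂_of_mem_segment hq
    · exact hcfg.dotp_le_u₂ ha hb (by linarith)
  · obtain ⟨hqe, c₂, c₃, hc₂, hc₃, hg⟩ := id hq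
    have hcontact : dotp (gradE a b q) q = 2 := by rw [dotp_gradE_self, hqe]; ring
    refine ⟨c₂, c₃, 2, hc₂, hc₃, two_pos, ?_, hg ▸ hcontact,
      hg ▸ hcfg.dotp_gradE_le_two ha hb hΔ.le hq⟩
    rw [hg, dotp_smul_add_smul_left] at hcontact
    nlinarith [mul_le_mul_of_nonneg_left (hcfg.dotp_le_u₂ ha hb (by linarith) q hqL) hc₂,
      mul_le_mul_of_nonneg_left (hcfg.dotp_le_u₃ ha hb (by linarith) q hqL) hc₃,
      mul_nonneg hc₂ hu₃.le, mul_nonneg hc₃ hu₂.le]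
  · refine ⟨0, 1, u₃, le_rfl, zero_le_one, hu₃, by linarith, ?_, ?_⟩ <;>
      simp only [one_smul, zero_smul, zero_add]
    · exact hcfg.dotp_eq_u₃_of_mem_segment hq
    · exact hcfg.dotp_le_u₃ ha hb (by linarith)

variable {φ : ℝ × ℝ → ℝ}

lemma phi_zero_snd_le (ha : 0 < a) (hb : 0 < b) (hΔ : 1 < Δ)
    (hcfg : GoodConfig a b Δ u₂ u₃ T₂ T₃) (hφ : IsPhi (contourL a b Δ u₂ u₃ T₂ T₃) φ)
    {y : ℝ × ℝ} (hy₁ : 0 < y.1) (hy₂ : y.2 < 0) : φ (0, y.2) ≤ φ y := by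
  have hw : ((0, y.2) : ℝ × ℝ) ≠ 0 := fun h => hy₂.ne (congrArg Prod.snd h)
  obtain ⟨hpos, hmem⟩ := hφ.2 _ hw
  have hcontact := hcfg.dotp_eq_u₂_of_fst_eq_zero ha hb hΔ hmem (by simp)
    (by simpa using mul_neg_of_pos_of_neg (inv_pos.mpr hpos) hy₂)
  have hdrift := hφ.mul_sub_le_dotp (hcfg.dotp_le_u₂ ha hb (by linarith)) hw hcontact y
  simp only [dotp, Prod.fst_sub, Prod.snd_sub, sub_self, mul_zero, add_zero] at hdrift
  have := neg_of_mul_neg_right (by linarith : u₂ * (φ (0, y.2) - φ y) < 0) hcfg.u₂_pos.le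
  linarith

lemma phi_diag_le (ha : 0 < a) (hb : 0 < b) (hΔ : 1 < Δ)
    (hcfg : GoodConfig a b Δ u₂ u₃ T₂ T₃) (hφ : IsPhi (contourL a b Δ u₂ u₃ T₂ T₃) φ)
    {y : ℝ × ℝ} (hy : y.1 < 0) : φ (y.1, y.1) ≤ φ y := by
  have hw : ((y.1, y.1) : ℝ × ℝ) ≠ 0 := fun h => hy.ne (congrArg Prod.fst h)
  obtain ⟨hpos, hmem⟩ := hφ.2 _ hw
  set q := (φ (y.1, y.1))⁻¹ • ((y.1, y.1) : ℝ × ℝ)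
  have hq : q ∈ arcE a b Δ := hcfg.mem_arcE_of_fst_eq_snd hb (by linarith) hmem (by simp [q])
    (by simpa [q] using mul_neg_of_pos_of_neg (inv_pos.mpr hpos) hy)
  have hcontact : dotp (gradE a b q) q = 2 := by rw [dotp_gradE_self, hq.1]; ring
  have hdrift := hφ.mul_sub_le_dotp (hcfg.dotp_gradE_le_two ha hb hΔ.le hq) hw hcontact y
  have hflat : dotp (gradE a b q) (((y.1, y.1) : ℝ × ℝ) - y) = 0 := by
    simp [dotp, gradE, q]
  linarith

lemma phi_add_sub_le (ha : 0 < a) (hb : 0 < b) (hΔ : 1 < Δ)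
    (hcfg : GoodConfig a b Δ u₂ u₃ T₂ T₃) (hφ : IsPhi (contourL a b Δ u₂ u₃ T₂ T₃) φ)
    {y v : ℝ × ℝ} {δ : ℝ} (hδ : 0 ≤ δ) (hv₂ : v.1 - Δ * v.2 ≤ -δ) (hv₃ : v.2 - Δ * v.1 ≤ -δ)
    (hneg : (y + v).1 < 0 ∨ (y + v).2 < 0) : φ (y + v) - φ y ≤ -(δ / (u₂ + u₃)) := by
  have hw : y + v ≠ 0 := by rintro h; simp [h] at hneg
  obtain ⟨hpos, hmem⟩ := hφ.2 _ hw
  have hqneg : ((φ (y + v))⁻¹ • (y + v)).1 < 0 ∨ ((φ (y + v))⁻¹ • (y + v)).2 < 0 := by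
    simp only [Prod.smul_fst, Prod.smul_snd, smul_eq_mul]
    exact hneg.imp (mul_neg_of_pos_of_neg (inv_pos.mpr hpos))
      (mul_neg_of_pos_of_neg (inv_pos.mpr hpos))
  obtain ⟨c₂, c₃, h, hc₂, hc₃, hh, hhc, hcontact, hL⟩ :=
    hcfg.exists_supportingLine ha hb hΔ hmem hqneg
  have hdrift := hφ.mul_sub_le_dotp hL hw hcontact y
  rw [add_sub_cancel_left, dotp_smul_add_smul_left] at hdrift
  simp only [dotp] at hdrift
  have hu : 0 < u₂ + u₃ := add_pos hcfg.u₂_pos hcfg.u₃_pos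
  have hhD : h * (δ / (u₂ + u₃)) ≤ (c₂ + c₃) * δ := by
    calc h * (δ / (u₂ + u₃)) ≤ (c₂ + c₃) * (u₂ + u₃) * (δ / (u₂ + u₃)) :=
          mul_le_mul_of_nonneg_right hhc (div_nonneg hδ hu.le)
      _ = (c₂ + c₃) * δ := by field_simp
  refine le_of_mul_le_mul_left ?_ hh
  linarith [mul_le_mul_of_nonneg_left hv₂ hc₂, mul_le_mul_of_nonneg_left hv₃ hc₃]

end GoodConfig

lemma rker_of_min_nonpos (b12 b23 b2 : ℝ) {y : ℤ × ℤ} (hy : min y.1 y.2 ≤ 0) (z : ℤ × ℤ) :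
    rker b12 b23 b2 y z =
      (if 0 < y.1 ∧ z = (0, y.2) then b12 else 0) +
        (if y.1 < y.2 ∧ z = (y.1, y.1) then b23 else 0) := by
  have hy' := min_le_iff.mp hy
  have h₃ : ∀ P : Prop, ¬(0 < y.2 ∧ y.2 ≤ y.1 ∧ P) := fun P ⟨h₁, h₂, _⟩ => by omega
  have h₅ : ∀ P : Prop, ¬(0 < y.1 ∧ y.1 < y.2 ∧ P) := fun P ⟨h₁, h₂, _⟩ => by omega
  have h₁ : 0 < y.1 → y.2 ≤ 0 := by omega
  simp only [rker, h₃, h₅, if_false, add_zero]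
  by_cases hpos : 0 < y.1 <;> simp [hpos, h₁]

lemma hasSum_rker_mul (b12 b23 b2 : ℝ) {y : ℤ × ℤ} (hy : min y.1 y.2 ≤ 0) (g : ℤ × ℤ → ℝ) :
    HasSum (fun z => rker b12 b23 b2 y z * g z)
      ((if 0 < y.1 then b12 * g (0, y.2) else 0) +
        (if y.1 < y.2 then b23 * g (y.1, y.1) else 0)) := by
  convert (hasSum_ite_eq ((0 : ℤ), y.2) (if 0 < y.1 then b12 * g (0, y.2) else 0)).add
    (hasSum_ite_eq (y.1, y.1) (if y.1 < y.2 then b23 * g (y.1, y.1) else 0)) using 1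
  funext z
  rw [rker_of_min_nonpos b12 b23 b2 hy, add_mul]
  congr 1 <;> split_ifs <;> simp_all

lemma GoodConfig.tsum_rker_mul_sub_nonpos {a b Δ u₂ u₃ : ℝ} {T₂ T₃ : ℝ × ℝ} {φ : ℝ × ℝ → ℝ}
    (ha : 0 < a) (hb : 0 < b) (hΔ : 1 < Δ) (hcfg : GoodConfig a b Δ u₂ u₃ T₂ T₃)
    (hφ : IsPhi (contourL a b Δ u₂ u₃ T₂ T₃) φ) {b12 b23 : ℝ} (hb12 : 0 ≤ b12) (hb23 : 0 ≤ b23)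
    (b2 : ℝ) {y : ℤ × ℤ} (hy : min y.1 y.2 < 0) :
    ∑' z, rker b12 b23 b2 y z * (φ (iv z) - φ (iv y)) ≤ 0 := by
  rw [(hasSum_rker_mul b12 b23 b2 hy.le _).tsum_eq]
  have hy' := min_lt_iff.mp hy
  refine add_nonpos ?_ ?_ <;> split_ifs with h
  · refine mul_nonpos_of_nonneg_of_nonpos hb12 (sub_nonpos.mpr ?_)
    simpa [iv] using hcfg.phi_zero_snd_le ha hb hΔ hφ (y := iv y) (by simpa [iv])
      (by simp only [iv]; exact_mod_cast (by omega : y.2 < 0))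
  · exact le_rfl
  · refine mul_nonpos_of_nonneg_of_nonpos hb23 (sub_nonpos.mpr ?_)
    simpa [iv] using hcfg.phi_diag_le ha hb hΔ hφ (y := iv y)
      (by simp only [iv]; exact_mod_cast (by omega : y.1 < 0))
  · exact le_rfl

lemma iv_add_neg_of_min_neg {y : ℤ × ℤ} (hy : min y.1 y.2 < 0) {v : ℝ × ℝ} (hv₂ : v.1 < 1)
    (hv₃ : v.2 < 1) : (iv y + v).1 < 0 ∨ (iv y + v).2 < 0 := by
  simp only [iv, Prod.fst_add, Prod.snd_add]
  rcases min_lt_iff.mp hy with h | h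
  · have : (y.1 : ℝ) ≤ -1 := by exact_mod_cast (by omega : y.1 ≤ -1)
    left; linarith
  · have : (y.2 : ℝ) ≤ -1 := by exact_mod_cast (by omega : y.2 ≤ -1)
    right; linarith

theorem stmt11_general (l1 l2 l3 b12 b23 : ℝ)
    (hl1 : 0 < l1) (hb12 : 0 < b12) (hb23 : 0 < b23)
    (hsum : l1 + l2 + l3 + b12 + b23 = 1) (h12 : l1 < l2) (h13 : l1 < l3)
    (a b : ℝ) (ha : 0 < a) (hb : 0 < b) :
    ∃ Δ₀ > (0 : ℝ), ∀ Δ > Δ₀, ∀ u₂ u₃ : ℝ, ∀ T₂ T₃ : ℝ × ℝ,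
      GoodConfig a b Δ u₂ u₃ T₂ T₃ →
      ∀ φ : ℝ × ℝ → ℝ, IsPhi (contourL a b Δ u₂ u₃ T₂ T₃) φ →
      ∃ C > (0 : ℝ), ∃ ε > (0 : ℝ), ∀ y : ℤ × ℤ, min y.1 y.2 < 0 → C < φ (iv y) →
        (∑' z : ℤ × ℤ, rker b12 b23 (l2 / (l2 + b12)) y z * (φ (iv z) - φ (iv y))) ≤ 0 ∧
        φ (iv y + ((l2 - l1, l3 - l1) : ℝ × ℝ)) - φ (iv y) < -(5 * ε) := by
  have hv₂ : 0 < l2 - l1 := by linarith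
  have hv₃ : 0 < l3 - l1 := by linarith
  refine ⟨1 + (l2 - l1) / (l3 - l1) + (l3 - l1) / (l2 - l1), by positivity,
    fun Δ hΔ u₂ u₃ T₂ T₃ hcfg φ hφ => ?_⟩
  have hΔ₁ : 1 < Δ := by linarith [div_pos hv₂ hv₃, div_pos hv₃ hv₂]
  have hΔ₂ : l2 - l1 < Δ * (l3 - l1) := by
    rw [← div_lt_iff₀ hv₃]; linarith [div_pos hv₃ hv₂]
  have hΔ₃ : l3 - l1 < Δ * (l2 - l1) := by
    rw [← div_lt_iff₀ hv₂]; linarith [div_pos hv₂ hv₃]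
  set δ := min (Δ * (l3 - l1) - (l2 - l1)) (Δ * (l2 - l1) - (l3 - l1))
  have hδ : 0 < δ := lt_min (by linarith) (by linarith)
  have hδ₂ : δ ≤ Δ * (l3 - l1) - (l2 - l1) := min_le_left _ _
  have hδ₃ : δ ≤ Δ * (l2 - l1) - (l3 - l1) := min_le_right _ _
  have hD : 0 < δ / (u₂ + u₃) := div_pos hδ (add_pos hcfg.u₂_pos hcfg.u₃_pos)
  refine ⟨1, one_pos, δ / (u₂ + u₃) / 10, by positivity, fun y hy _ => ⟨?_, ?_⟩⟩
  · exact hcfg.tsum_rker_mul_sub_nonpos ha hb hΔ₁ hφ hb12.le hb23.le _ hy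
  · have hneg := iv_add_neg_of_min_neg hy (v := (l2 - l1, l3 - l1))
      (by dsimp only; linarith) (by dsimp only; linarith)
    have := hcfg.phi_add_sub_le ha hb hΔ₁ hφ hδ.le (by dsimp only; linarith)
      (by dsimp only; linarith) hneg
    linarith

/-- Lemma about the domain `E₋ = {min(y₂,y₃) < 0}`: if `λ₁ < λ₂` and
`λ₁ < λ₃` then, for all sufficiently large `Δ`, there are `C > 0` and `ε > 0` such
that for every `y ∈ ℤ²` with `min(y₂,y₃) < 0` and `φ(y) > C`:
(a) `Σ_z r_{yz}(φ(z) − φ(y)) ≤ 0`, and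
(b) `φ(y + (λ₂−λ₁, λ₃−λ₁)) − φ(y) < −5ε`. -/
theorem stmt11 (l1 l2 l3 b12 b23 : ℝ)
    (hl1 : 0 < l1) (hl2 : 0 < l2) (hl3 : 0 < l3) (hb12 : 0 < b12) (hb23 : 0 < b23)
    (hsum : l1 + l2 + l3 + b12 + b23 = 1) (h12 : l1 < l2) (h13 : l1 < l3)
    (a b : ℝ) (ha : 0 < a) (hb : 0 < b) :
    ∃ Δ₀ > (0 : ℝ), ∀ Δ > Δ₀, ∀ u₂ u₃ : ℝ, ∀ T₂ T₃ : ℝ × ℝ,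
      GoodConfig a b Δ u₂ u₃ T₂ T₃ →
      ∀ φ : ℝ × ℝ → ℝ, IsPhi (contourL a b Δ u₂ u₃ T₂ T₃) φ →
      ∃ C > (0 : ℝ), ∃ ε > (0 : ℝ), ∀ y : ℤ × ℤ, min y.1 y.2 < 0 → C < φ (iv y) →
        (∑' z : ℤ × ℤ, rker b12 b23 (l2 / (l2 + b12)) y z * (φ (iv z) - φ (iv y))) ≤ 0 ∧
        φ (iv y + ((l2 - l1, l3 - l1) : ℝ × ℝ)) - φ (iv y) < -(5 * ε) :=
  stmt11_general l1 l2 l3 b12 b23 hl1 hb12 hb23 hsum h12 h13 a b ha hb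
end
end
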